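/- For all (ν,λ) with 0 < ν < 1 and 2√ν ≤ λ < 1+ν, the quantity W(−1,ν,λ) = P(ν,λ)·Q(ν,λ) is strictly positive, where P(ν,λ) := 1 + νλ² − 2νλ − ν² and Q(ν,λ) := ν³ − ν − 2νλ + λ². -/

import Mathlib

/-! Write `v = s²` with `0 < s < 1`, so the hypothesis reads `2 s ≤ l`. At `l = 2 s` the factors
are `P = (1 - s)² (1 + 2 s + 3 s²)` and `Q = s² (1 - s) (3 - s - s² - s³)`, both positive.
`Q` only grows as `l` increases past `2 s`. So does `P = s² (l - 1)² + 1 - s² - s⁴` when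
`2 s > 1`; when `s ≤ 1/2` its constant part `1 - s² - s⁴` is already positive. -/

noncomputable def W (v l y : ℝ) : ℝ :=
  l^2*v^4*y^4 + 2*l*v^2*(l^2 + v^2 - 1)*y^3
    - v*(1 - 2*v*l^2 - l^4 + v^4 - 2*v^2)*y^2
    + 2*v*l*(1 + l^2 - v^2)*y + l^2

def P (v l : ℝ) : ℝ := 1 + v*l^2 - 2*v*l - v^2

def Q (v l : ℝ) : ℝ := v^3 - v - 2*v*l + l^2

theorem W_neg_one (v l : ℝ) : W v l (-1) = P v l * Q v l := by
  unfold W P Q; ring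

section

variable {s l : ℝ}

theorem P_sq_pos (hs0 : 0 < s) (hs1 : s < 1) (hl : 2*s ≤ l) : 0 < P (s^2) l := by
  have hP : P (s^2) l = s^2*(l - 1)^2 + 1 - s^2 - s^4 := by unfold P; ring
  rw [hP]
  rcases le_or_gt (2*s) 1 with hs | hs
  · have hs2 : s^2 ≤ 1/4 := by nlinarith
    nlinarith [sq_nonneg (s*(l - 1))]
  · have hl1 : (2*s - 1)^2 ≤ (l - 1)^2 := by nlinarith
    have hmin : 0 < (1 - s)^2 * (1 + 2*s + 3*s^2) := by
      have : 0 < 1 - s := by linarith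
      positivity
    nlinarith [mul_le_mul_of_nonneg_left hl1 (sq_nonneg s)]

theorem Q_sq_pos (hs0 : 0 < s) (hs1 : s < 1) (hl : 2*s ≤ l) : 0 < Q (s^2) l := by
  have hQ : Q (s^2) l = (l - 2*s)*(l + 2*s - 2*s^2) + s^2*((1 - s)*(3 - s - s^2 - s^3)) := by
    unfold Q; ring
  have hmove : 0 ≤ (l - 2*s)*(l + 2*s - 2*s^2) :=
    mul_nonneg (by linarith) (by nlinarith)
  have hbase : 0 < s^2*((1 - s)*(3 - s - s^2 - s^3)) := by
    have h1 : 0 < 1 - s := by linarith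
    have h2 : 0 < 3 - s - s^2 - s^3 := by nlinarith
    positivity
  rw [hQ]
  exact add_pos_of_nonneg_of_pos hmove hbase

end

theorem stmt4_general (v l : ℝ) (hv0 : 0 < v) (hv1 : v < 1)
    (hl1 : 2*Real.sqrt v ≤ l) :
    W v l (-1) = (1 + v*l^2 - 2*v*l - v^2) * (v^3 - v - 2*v*l + l^2) ∧
    0 < W v l (-1) := by
  obtain ⟨s, hs0, hs1, rfl, hl⟩ : ∃ s : ℝ, 0 < s ∧ s < 1 ∧ s^2 = v ∧ 2*s ≤ l :=
    ⟨Real.sqrt v, Real.sqrt_pos.mpr hv0, (Real.sqrt_lt' one_pos).mpr (by simpa using hv1),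
      Real.sq_sqrt hv0.le, hl1⟩
  refine ⟨W_neg_one _ _, ?_⟩
  rw [W_neg_one]
  exact mul_pos (P_sq_pos hs0 hs1 hl) (Q_sq_pos hs0 hs1 hl)

theorem stmt4 (v l : ℝ) (hv0 : 0 < v) (hv1 : v < 1)
    (hl1 : 2*Real.sqrt v ≤ l) (hl2 : l < 1 + v) :
    W v l (-1) = (1 + v*l^2 - 2*v*l - v^2) * (v^3 - v - 2*v*l + l^2) ∧
    0 < W v l (-1) :=
  stmt4_general v l hv0 hv1 hl1
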